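/- Fix κ > 0 with ℙ(ω(0) ≥ κ) > 0. If M ∈ ℕ is large enough then there is a constant 0 < C < ∞ such that for every l ≥ 1, the ℙ-probability that some ℓ¹-lattice animal Γ ⊆ Z^d with 0 ∈ Γ and #Γ = l satisfies ∑_{q∈Γ} 1{B(q) is occupied} < l/2 is at most e^{−C l}. -/

import Mathlib

open MeasureTheory ProbabilityTheory Filter Set
open scoped ENNReal NNReal BigOperators Topology

namespace RWRP

/-- Sites of the lattice `ℤ^d`. -/
abbrev Site (d : ℕ) := Fin d → ℤ

variable {d : ℕ}

/-- ℓ¹ distance between two sites, as a natural number. -/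
def dist1 (u v : Site d) : ℕ := ∑ i, (u i - v i).natAbs

/-- ℓ¹ norm of a site, as a real number. -/
noncomputable def norm1 (x : Site d) : ℝ := ∑ i, |(x i : ℝ)|

/-- ℓ^∞ norm of a site, as a real number. -/
noncomputable def norminf (x : Site d) : ℝ :=
  ((Finset.univ.sup fun i => (x i).natAbs : ℕ) : ℝ)

/-- A nearest-neighbour path on `ℤ^d`, encoded as the list of its successive positions. -/
def IsNNPath (r : List (Site d)) : Prop := r.Chain' fun u v => dist1 u v = 1

/-- `AdmissiblePath V x y r` : `r` is a nearest-neighbour path from `x` to `y` which stays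
in `V` and visits `y` exactly at its final point.  Such paths are in natural bijection with
the trajectories of the simple random walk started at `x` and stopped at the hitting time
`H(y)`, restricted to the event `{H(y) < T_V}`. -/
def AdmissiblePath (V : Set (Site d)) (x y : Site d) (r : List (Site d)) : Prop :=
  IsNNPath r ∧ r.head? = some x ∧ r.getLast? = some y ∧
    (∀ z ∈ r.dropLast, z ≠ y) ∧ ∀ z ∈ r, z ∈ V

/-- The weight of a path `r` for the simple random walk in the potential `ω` :
`(2d)^{-(|r|-1)} exp(-∑_{k<|r|-1} ω(r_k))`.  The weight of `r` is exactly
`E^x[exp(-∑_{k=0}^{H(y)-1} ω(S_k)) ; (S_0, …, S_{H(y)}) = r]`. -/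
noncomputable def pathWeight (ω : Site d → ℝ) (r : List (Site d)) : ℝ≥0∞ :=
  (2 * (d : ℝ≥0∞))⁻¹ ^ (r.length - 1) *
    ENNReal.ofReal (Real.exp (-((r.dropLast.map ω).sum)))

/-- `eCostE ω V x y = E^x[exp(-∑_{k=0}^{H(y)-1} ω(S_k)) 1_{H(y) < T_V}]`, as an
extended nonnegative real. -/
noncomputable def eCostE (ω : Site d → ℝ) (V : Set (Site d)) (x y : Site d) : ℝ≥0∞ :=
  ∑' r : {r : List (Site d) // AdmissiblePath V x y r}, pathWeight ω r

/-- `eCost ω V x y = E^x[exp(-∑_{k=0}^{H(y)-1} ω(S_k)) 1_{H(y) < T_V}]`, as a real number. -/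
noncomputable def eCost (ω : Site d → ℝ) (V : Set (Site d)) (x y : Site d) : ℝ :=
  (eCostE ω V x y).toReal

/-- The travel cost `a_V(x,y,ω) = -log e_V(x,y,ω)`, real-valued. -/
noncomputable def aCost (ω : Site d → ℝ) (V : Set (Site d)) (x y : Site d) : ℝ :=
  -Real.log (eCost ω V x y)

/-- The travel cost `a_V(x,y,ω) = -log e_V(x,y,ω)` with values in `[0,∞]`
(it equals `∞` when `e_V(x,y,ω) = 0`, i.e. when no admissible path exists). -/
noncomputable def aCostE (ω : Site d → ℝ) (V : Set (Site d)) (x y : Site d) : ℝ≥0∞ :=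
  if eCostE ω V x y = 0 then ⊤ else ENNReal.ofReal (aCost ω V x y)

/-- The total weight of the admissible paths from `0` to `x` (in the whole lattice)
satisfying the additional condition `p`; equals
`E^0[exp(-∑_{k=0}^{H(x)-1} ω(S_k)) 1_{H(x)<∞} 1_{p}]`. -/
noncomputable def qMass (ω : Site d → ℝ) (x : Site d) (p : List (Site d) → Prop) : ℝ≥0∞ :=
  ∑' r : {r : List (Site d) // AdmissiblePath Set.univ 0 x r ∧ p r}, pathWeight ω r

/-- `qProb ω x p = Q_ω^{0,x}(p)`, the probability, under the weighted path measure
`Q_ω^{0,x}`, that the walk stopped at `H(x)` satisfies `p`. -/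
noncomputable def qProb (ω : Site d → ℝ) (x : Site d) (p : List (Site d) → Prop) : ℝ :=
  ((eCostE ω Set.univ 0 x)⁻¹ * qMass ω x p).toReal

/-- The number of distinct sites visited by the walk strictly before the end of the
path `r`, i.e. `#A` with `A = {S_k ; 0 ≤ k < H(x)}`. -/
noncomputable def rangeSize (r : List (Site d)) : ℕ := r.dropLast.toFinset.card

/-- `qIntegral ω x f = Ê_ω^{0,x}[f]`, the expectation of the path functional `f` under the
weighted path measure `Q_ω^{0,x}`. -/
noncomputable def qIntegral (ω : Site d → ℝ) (x : Site d) (f : List (Site d) → ℝ≥0∞) : ℝ :=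
  ((eCostE ω Set.univ 0 x)⁻¹ *
    ∑' r : {r : List (Site d) // AdmissiblePath Set.univ 0 x r}, pathWeight ω r.1 * f r.1).toReal

/-- `qRange ω x = Ê_ω^{0,x}[#A]`, the mean size of the range of the walk before hitting `x`
under the weighted path measure. -/
noncomputable def qRange (ω : Site d → ℝ) (x : Site d) : ℝ :=
  qIntegral ω x fun r => (rangeSize r : ℝ≥0∞)

/-- A path realizing the first return of the walk to the origin. -/
def ReturnPath (r : List (Site d)) : Prop :=
  IsNNPath r ∧ r.head? = some 0 ∧ r.getLast? = some 0 ∧ 2 ≤ r.length ∧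
    ∀ z ∈ r.dropLast.tail, z ≠ (0 : Site d)

/-- `returnProb d = P^0(H₂(0) < ∞)`, the probability that the simple random walk on `ℤ^d`
returns to its starting point. -/
noncomputable def returnProb (d : ℕ) : ℝ :=
  (∑' r : {r : List (Site d) // ReturnPath r}, pathWeight (fun _ : Site d => (0 : ℝ)) r.1).toReal

/-- The cube `[-C‖x‖₁, C‖x‖₁]^d ∩ ℤ^d`. -/
def box (x : Site d) (C : ℝ) : Set (Site d) := {z | ∀ i, |((z i : ℤ) : ℝ)| ≤ C * norm1 x}

/-- The truncated potential `ω̂ = ω ∧ (4d/γ) log ‖x‖₁`. -/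
noncomputable def trunc (γ : ℝ) (x : Site d) (ω : Site d → ℝ) : Site d → ℝ :=
  fun z => min (ω z) (4 * d / γ * Real.log (norm1 x))

/-- The entropy `Ent(X) = E[X log X] - E[X] log E[X]` of a random variable under `μ`. -/
noncomputable def entropy {Ω : Type*} [MeasurableSpace Ω] (μ : Measure Ω) (X : Ω → ℝ) : ℝ :=
  (∫ ω, X ω * Real.log (X ω) ∂μ) - (∫ ω, X ω ∂μ) * Real.log (∫ ω, X ω ∂μ)


/-- The box `B(q) = Mq + [0,M)^d` is occupied for the potential `ω` : some site of the box
has potential at least `κ`. -/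
def boxOccupied (κ : ℝ) (M : ℕ) (ω : Site d → ℝ) (q : Site d) : Prop :=
  ∃ z : Site d, (∀ i, (M : ℤ) * q i ≤ z i ∧ z i < (M : ℤ) * q i + (M : ℤ)) ∧ κ ≤ ω z

/-- An ℓ¹-lattice animal: a nonempty finite subset of `ℤ^d` which is connected for the
adjacency relation `‖v₁ - v₂‖₁ = 1`. -/
def IsLatticeAnimal (Γ : Finset (Site d)) : Prop :=
  Γ.Nonempty ∧ ∀ u ∈ Γ, ∀ v ∈ Γ, ∃ r : List (Site d), IsNNPath r ∧
    r.head? = some u ∧ r.getLast? = some v ∧ ∀ z ∈ r, z ∈ Γ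

open scoped Classical

/-! A lattice animal of size `l` containing `0` is the range of a walk from `0` with `2l` steps in
`{-1, 0, 1}^d` (go around a spanning tree, then stay put), so there are at most `9^{dl}` of them.
If fewer than `l/2` of its boxes are occupied, some `⌈l/2⌉` of its boxes are empty: the
`⌈l/2⌉ M^d` sites they contain all carry a potential below `κ`, which by independence has
probability `p^{⌈l/2⌉ M^d}` with `p = ℙ(ω(0) < κ) < 1`. The union bound gives
`(2·9^d)^l p^{⌈l/2⌉ M^d} ≤ e^{-l/2}` as soon as `(2·9^d)^2 p^{M^d} ≤ e^{-1}`. -/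

section Chain

variable {X : Type*} {R : X → X → Prop}

theorem exists_rel_of_isChain_of_head_of_getLast {P : X → Prop} :
    ∀ {r : List X} {a b : X}, r.IsChain R → r.head? = some a → r.getLast? = some b →
      P a → ¬ P b → ∃ t, P t ∧ ∃ v, ¬ P v ∧ v ∈ r ∧ R t v
  | [], _, _, _, ha, _, _, _ => by simp at ha
  | [x], a, b, _, ha, hb, hPa, hPb => by
    obtain rfl : x = a := by simpa using ha
    obtain rfl : x = b := by simpa using hb
    exact absurd hPa hPb
  | x :: y :: s, a, b, hr, ha, hb, hPa, hPb => by
    obtain rfl : x = a := by simpa using ha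
    rw [List.isChain_cons_cons] at hr
    by_cases hPy : P y
    · obtain ⟨t, hPt, v, hPv, hvr, htv⟩ :=
        exists_rel_of_isChain_of_head_of_getLast hr.2 rfl
          (by simpa [List.getLast?_cons_cons] using hb) hPy hPb
      exact ⟨t, hPt, v, hPv, List.mem_cons_of_mem _ hvr, htv⟩
    · exact ⟨x, hPa, y, hPy, by simp, hr.1⟩

theorem isChain_detour {w₁ w₂ : List X} {t v : X} (hw : (w₁ ++ t :: w₂).IsChain R)
    (htv : R t v) (hvt : R v t) : (w₁ ++ t :: v :: t :: w₂).IsChain R := by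
  rw [List.isChain_split] at hw ⊢
  exact ⟨hw.1, .cons_cons htv (.cons_cons hvt hw.2)⟩

variable [DecidableEq X]

theorem exists_covering_chain_of_subset (hR : ∀ ⦃a b⦄, R a b → R b a) {Γ Δ : Finset X} {x : X}
    (hconn : ∀ y ∈ Γ, ∃ r : List X, r.IsChain R ∧ r.head? = some x ∧ r.getLast? = some y ∧
      ∀ z ∈ r, z ∈ Γ)
    (hΔΓ : Δ ⊆ Γ) {w : List X} (hwx : w.head? = some x) (hw : w.IsChain R)
    (hwΔ : w.toFinset = Δ) (hlen : w.length < 2 * Δ.card) :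
    ∃ w : List X, w.head? = some x ∧ w.IsChain R ∧ w.toFinset = Γ ∧ w.length < 2 * Γ.card := by
  -- a site `v ∉ Δ` adjacent to some `t ∈ Δ` is added by the detour `t → v → t`
  by_cases hΓΔ : Γ ⊆ Δ
  · obtain rfl := hΔΓ.antisymm hΓΔ
    exact ⟨w, hwx, hw, hwΔ, hlen⟩
  obtain ⟨y, hyΓ, hyΔ⟩ := Finset.not_subset.1 hΓΔ
  obtain ⟨r, hr, hrx, hry, hrΓ⟩ := hconn y hyΓ
  have hxΔ : x ∈ Δ := by
    rw [← hwΔ, List.mem_toFinset]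
    exact List.mem_of_mem_head? hwx
  obtain ⟨t, htΔ, v, hvΔ, hvr, htv⟩ :=
    exists_rel_of_isChain_of_head_of_getLast (P := (· ∈ Δ)) hr hrx hry hxΔ hyΔ
  have htw : t ∈ w := by rwa [← List.mem_toFinset, hwΔ]
  obtain ⟨w₁, w₂, rfl⟩ := List.append_of_mem htw
  have hcard : (insert v Δ).card = Δ.card + 1 := Finset.card_insert_of_notMem hvΔ
  have hvΔΓ : insert v Δ ⊆ Γ := Finset.insert_subset (hrΓ v hvr) hΔΓ
  have hdecr : Γ.card - (insert v Δ).card < Γ.card - Δ.card := by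
    have := Finset.card_le_card hvΔΓ
    omega
  refine exists_covering_chain_of_subset hR hconn hvΔΓ (w := w₁ ++ t :: v :: t :: w₂)
    ?_ (isChain_detour hw htv (hR htv)) ?_ ?_
  · cases w₁ <;> simpa using hwx
  · ext z
    simp only [← hwΔ, List.mem_toFinset, List.mem_append, List.mem_cons, Finset.mem_insert]
    tauto
  · simp only [List.length_append, List.length_cons] at hlen ⊢
    omega
termination_by Γ.card - Δ.card

theorem exists_covering_chain (hR : ∀ ⦃a b⦄, R a b → R b a) {Γ : Finset X} {x : X} (hx : x ∈ Γ)
    (hconn : ∀ y ∈ Γ, ∃ r : List X, r.IsChain R ∧ r.head? = some x ∧ r.getLast? = some y ∧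
      ∀ z ∈ r, z ∈ Γ) :
    ∃ w : List X, w.head? = some x ∧ w.IsChain R ∧ w.toFinset = Γ ∧ w.length < 2 * Γ.card :=
  exists_covering_chain_of_subset hR hconn (Finset.singleton_subset_iff.2 hx)
    rfl (List.isChain_singleton x) (by simp) (by simp)

end Chain

theorem dist1_comm (u v : Site d) : dist1 u v = dist1 v u :=
  Finset.sum_congr rfl fun i _ => by omega

theorem sub_mem_Icc_of_dist1_le_one {u v : Site d} (h : dist1 u v ≤ 1) :
    v - u ∈ Finset.Icc (-1) 1 := by
  have hi : ∀ i, (u i - v i).natAbs ≤ 1 := fun i =>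
    (Finset.single_le_sum (f := fun i => (u i - v i).natAbs) (fun _ _ => Nat.zero_le _)
      (Finset.mem_univ i)).trans h
  simp only [Finset.mem_Icc, Pi.le_def, Pi.sub_apply, Pi.neg_apply, Pi.one_apply]
  exact ⟨fun i => by have := hi i; omega, fun i => by have := hi i; omega⟩

noncomputable def walkRanges (d n : ℕ) : Finset (Finset (Site d)) :=
  (Fintype.piFinset fun _ : Fin n => Finset.Icc (-1 : Site d) 1).image
    fun g => Finset.univ.image (Fin.partialSum g)

theorem card_walkRanges_le (d n : ℕ) : (walkRanges d n).card ≤ 3 ^ (d * n) := by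
  refine Finset.card_image_le.trans (le_of_eq ?_)
  simp [Fintype.card_piFinset, Pi.card_Icc, pow_mul]

theorem image_mem_walkRanges {n : ℕ} (f : Fin (n + 1) → Site d) (hf0 : f 0 = 0)
    (hf : ∀ i : Fin n, f i.succ - f i.castSucc ∈ Finset.Icc (-1) 1) :
    Finset.univ.image f ∈ walkRanges d n := by
  refine Finset.mem_image.2 ⟨fun i => -f i.castSucc + f i.succ, ?_, ?_⟩
  · simpa [neg_add_eq_sub] using hf
  · have hsum := Fin.partialSum_left_neg f
    rw [hf0, zero_vadd] at hsum
    rw [hsum]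

theorem toFinset_mem_walkRanges {n : ℕ} {w : List (Site d)} (hw0 : w.head? = some 0)
    (hw : w.IsChain fun u v => v - u ∈ Finset.Icc (-1) 1) (hlen : w.length ≤ n + 1) :
    w.toFinset ∈ walkRanges d n := by
  have hpos : 0 < w.length := List.length_pos_iff.2 (by rintro rfl; simp at hw0)
  -- the walk is padded by staying at its last site
  let f : Fin (n + 1) → Site d := fun i => w[min (i : ℕ) (w.length - 1)]'(by omega)
  convert image_mem_walkRanges f ?_ ?_
  · ext z
    simp only [List.mem_toFinset, Finset.mem_image, Finset.mem_univ, true_and, f,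
      List.mem_iff_getElem]
    constructor
    · rintro ⟨m, hm, rfl⟩
      exact ⟨⟨m, by omega⟩, by simp [Nat.min_eq_left (Nat.le_sub_one_of_lt hm)]⟩
    · rintro ⟨i, rfl⟩
      exact ⟨_, _, rfl⟩
  · simpa [f, List.head?_eq_getElem?, List.getElem?_eq_getElem hpos] using hw0
  · intro i
    by_cases hi : (i : ℕ) + 1 < w.length
    · simpa [f, Nat.min_eq_left (show (i : ℕ) + 1 ≤ w.length - 1 by omega),
        Nat.min_eq_left (show (i : ℕ) ≤ w.length - 1 by omega)] using
        List.isChain_iff_getElem.1 hw i hi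
    · simp [f, Nat.min_eq_right (show w.length - 1 ≤ (i : ℕ) + 1 by omega),
        Nat.min_eq_right (show w.length - 1 ≤ (i : ℕ) by omega)]

theorem mem_walkRanges_of_isLatticeAnimal {Γ : Finset (Site d)} (hΓ : IsLatticeAnimal Γ)
    (h0 : (0 : Site d) ∈ Γ) : Γ ∈ walkRanges d (2 * Γ.card) := by
  obtain ⟨w, hw0, hw, rfl, hlen⟩ :=
    exists_covering_chain (fun u v (h : dist1 u v = 1) => (dist1_comm u v ▸ h)) h0
      fun y hy => hΓ.2 0 h0 y hy
  exact toFinset_mem_walkRanges hw0 (hw.imp fun u v h => sub_mem_Icc_of_dist1_le_one h.le)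
    (by omega)

noncomputable def boxSites (M : ℕ) (q : Site d) : Finset (Site d) :=
  Finset.Icc (fun i => (M : ℤ) * q i) (fun i => (M : ℤ) * q i + (M - 1))

theorem mem_boxSites {M : ℕ} {q z : Site d} :
    z ∈ boxSites M q ↔ ∀ i, (M : ℤ) * q i ≤ z i ∧ z i < (M : ℤ) * q i + M := by
  simp only [boxSites, Finset.mem_Icc, Pi.le_def]
  exact ⟨fun h i => ⟨h.1 i, by have := h.2 i; omega⟩,
    fun h => ⟨fun i => (h i).1, fun i => by have := (h i).2; omega⟩⟩

theorem boxOccupied_iff {κ : ℝ} {M : ℕ} {ω : Site d → ℝ} {q : Site d} :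
    boxOccupied κ M ω q ↔ ∃ z ∈ boxSites M q, κ ≤ ω z := by
  simp only [boxOccupied, mem_boxSites]

theorem card_boxSites (M : ℕ) (q : Site d) : (boxSites M q).card = M ^ d := by
  rw [boxSites, Pi.card_Icc, Finset.prod_congr rfl fun i _ => ?_, Finset.prod_const,
    Finset.card_univ, Fintype.card_fin]
  rw [Int.card_Icc]
  omega

theorem eq_ediv_of_mem_boxSites {M : ℕ} {q z : Site d} (hz : z ∈ boxSites M q) :
    q = fun i => z i / M := by
  funext i
  obtain ⟨h₁, h₂⟩ := mem_boxSites.1 hz i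
  exact ((Int.ediv_emod_unique (r := z i - M * q i) (by omega)).2 ⟨by ring, by omega, by omega⟩).1.symm

theorem card_biUnion_boxSites (M : ℕ) (S : Finset (Site d)) :
    (S.biUnion (boxSites M)).card = S.card * M ^ d := by
  rw [Finset.card_biUnion, Finset.sum_const_nat fun q _ => card_boxSites M q]
  intro q _ q' _ hqq'
  exact Finset.disjoint_left.2 fun z hz hz' =>
    hqq' ((eq_ediv_of_mem_boxSites hz).trans (eq_ediv_of_mem_boxSites hz').symm)

theorem exists_subset_card_eq_forall_not_of_card_filter_lt {α : Type*} {Γ : Finset α}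
    {p : α → Prop} [DecidablePred p] (h : ((Γ.filter p).card : ℝ) < Γ.card / 2) :
    ∃ S ⊆ Γ, S.card = (Γ.card + 1) / 2 ∧ ∀ q ∈ S, ¬ p q := by
  have hp : 2 * (Γ.filter p).card < Γ.card := by
    have : ((2 * (Γ.filter p).card : ℕ) : ℝ) < Γ.card := by push_cast; linarith
    exact_mod_cast this
  have hsplit := Finset.card_filter_add_card_filter_not (s := Γ) p
  obtain ⟨S, hS, hcard⟩ :=
    Finset.exists_subset_card_eq (s := Γ.filter (¬ p ·)) (n := (Γ.card + 1) / 2) (by omega)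
  exact ⟨S, hS.trans (Finset.filter_subset _ _), hcard,
    fun q hq => (Finset.mem_filter.1 (hS hq)).2⟩

theorem measure_biInter_preimage_eq_pow {Ω ι β : Type*} [MeasurableSpace Ω] [MeasurableSpace β]
    {μ : Measure Ω} {X : ι → Ω → β} (hind : iIndepFun X μ) {i₀ : ι}
    (hid : ∀ i, IdentDistrib (X i) (X i₀) μ μ) {s : Set β} (hs : MeasurableSet s)
    (T : Finset ι) : μ (⋂ i ∈ T, X i ⁻¹' s) = μ (X i₀ ⁻¹' s) ^ T.card := by
  rw [hind.measure_inter_preimage_eq_mul T fun _ _ => hs,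
    Finset.prod_congr rfl fun i _ => (hid i).measure_mem_eq hs, Finset.prod_const]

def sparseAnimalEvent (κ : ℝ) (M l : ℕ) : Set (Site d → ℝ) :=
  {ω | ∃ Γ : Finset (Site d), (0 : Site d) ∈ Γ ∧ IsLatticeAnimal Γ ∧ Γ.card = l ∧
    ((Γ.filter fun q => boxOccupied κ M ω q).card : ℝ) < (l : ℝ) / 2}

theorem sparseAnimalEvent_subset (κ : ℝ) (M l : ℕ) :
    sparseAnimalEvent (d := d) κ M l ⊆
      ⋃ Γ ∈ (walkRanges d (2 * l)).filter (·.card = l), ⋃ S ∈ Γ.powersetCard ((l + 1) / 2),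
        ⋂ z ∈ S.biUnion (boxSites M), (fun ω : Site d → ℝ => ω z) ⁻¹' Set.Iio κ := by
  rintro ω ⟨Γ, h0, hΓ, rfl, hsparse⟩
  obtain ⟨S, hSΓ, hS, hSfree⟩ := exists_subset_card_eq_forall_not_of_card_filter_lt hsparse
  simp only [Set.mem_iUnion, Set.mem_iInter, Finset.mem_filter, Finset.mem_powersetCard,
    Finset.mem_biUnion, Set.mem_preimage, Set.mem_Iio, exists_prop]
  refine ⟨Γ, ⟨mem_walkRanges_of_isLatticeAnimal hΓ h0, rfl⟩, S, ⟨hSΓ, hS⟩, ?_⟩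
  rintro z ⟨q, hq, hz⟩
  by_contra! hκz
  exact hSfree q hq (boxOccupied_iff.2 ⟨z, hz, hκz⟩)

theorem measure_sparseAnimalEvent_le {μ : Measure (Site d → ℝ)}
    (hindep : iIndepFun (fun z : Site d => fun ω => ω z) μ)
    (hident : ∀ z : Site d, IdentDistrib (fun ω => ω z) (fun ω => ω 0) μ μ) (κ : ℝ) (M l : ℕ) :
    μ (sparseAnimalEvent κ M l) ≤
      (2 * 9 ^ d) ^ l * (μ {ω | ω 0 < κ} ^ M ^ d) ^ ((l + 1) / 2) := by
  set k := (l + 1) / 2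
  set a := μ {ω | ω 0 < κ} ^ M ^ d
  have hbox : ∀ S : Finset (Site d), S.card = k →
      μ (⋂ z ∈ S.biUnion (boxSites M), (fun ω : Site d → ℝ => ω z) ⁻¹' Set.Iio κ) = a ^ k := by
    intro S hS
    rw [measure_biInter_preimage_eq_pow hindep hident measurableSet_Iio, card_biUnion_boxSites,
      hS, mul_comm, pow_mul]
    rfl
  calc μ (sparseAnimalEvent κ M l)
      ≤ ∑ Γ ∈ (walkRanges d (2 * l)).filter (·.card = l), ∑ S ∈ Γ.powersetCard k,
          μ (⋂ z ∈ S.biUnion (boxSites M), (fun ω : Site d → ℝ => ω z) ⁻¹' Set.Iio κ) :=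
        (measure_mono (sparseAnimalEvent_subset κ M l)).trans <|
          (measure_biUnion_finset_le _ _).trans <|
            Finset.sum_le_sum fun _ _ => measure_biUnion_finset_le _ _
    _ = ∑ _Γ ∈ (walkRanges d (2 * l)).filter (·.card = l), (l.choose k : ℝ≥0∞) * a ^ k := by
        refine Finset.sum_congr rfl fun Γ hΓ => ?_
        rw [Finset.sum_congr rfl fun S hS => hbox S (Finset.mem_powersetCard.1 hS).2,
          Finset.sum_const, Finset.card_powersetCard, (Finset.mem_filter.1 hΓ).2, nsmul_eq_mul]
    _ ≤ (9 ^ (d * l) * 2 ^ l : ℕ) * a ^ k := by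
        rw [Finset.sum_const, nsmul_eq_mul, ← mul_assoc]
        have h9 : 3 ^ (d * (2 * l)) = 9 ^ (d * l) := by rw [mul_left_comm, pow_mul]; norm_num
        gcongr
        exact_mod_cast Nat.mul_le_mul
          (h9 ▸ (Finset.card_filter_le _ _).trans (card_walkRanges_le d _)) (l.choose_le_two_pow k)
    _ = (2 * 9 ^ d) ^ l * a ^ k := by
        push_cast
        ring

theorem pow_mul_pow_le_ofReal_exp {K a : ℝ≥0∞} (hK : 1 ≤ K)
    (ha : K ^ 2 * a ≤ ENNReal.ofReal (Real.exp (-1))) {l k : ℕ} (hlk : l ≤ 2 * k) :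
    K ^ l * a ^ k ≤ ENNReal.ofReal (Real.exp (-(1 / 2) * l)) :=
  calc K ^ l * a ^ k ≤ K ^ (2 * k) * a ^ k := by gcongr
    _ = (K ^ 2 * a) ^ k := by rw [pow_mul, mul_pow]
    _ ≤ ENNReal.ofReal (Real.exp (-1)) ^ k := by gcongr
    _ = ENNReal.ofReal (Real.exp (-k)) := by
        rw [← ENNReal.ofReal_pow (Real.exp_pos _).le, ← Real.exp_nat_mul, mul_neg_one]
    _ ≤ ENNReal.ofReal (Real.exp (-(1 / 2) * l)) := by
        have : (l : ℝ) ≤ 2 * k := by exact_mod_cast hlk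
        exact ENNReal.ofReal_le_ofReal (Real.exp_le_exp.2 (by linarith))

theorem lattice_animal_occupied_boxes_general
    (d : ℕ) (hd : 2 ≤ d) (μ : Measure ((Site d) → ℝ)) [IsProbabilityMeasure μ]
    (hindep : iIndepFun (fun z : Site d => fun ω => ω z) μ)
    (hident : ∀ z : Site d, IdentDistrib (fun ω => ω z) (fun ω => ω 0) μ μ)
    (κ : ℝ) (hκpos : 0 < μ {ω | κ ≤ ω 0}) :
    ∃ M₀ : ℕ, ∀ M : ℕ, M₀ ≤ M →
      ∃ C : ℝ, 0 < C ∧ ∀ l : ℕ, 1 ≤ l →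
        μ {ω | ∃ Γ : Finset (Site d), (0 : Site d) ∈ Γ ∧ IsLatticeAnimal Γ ∧ Γ.card = l ∧
              ((Γ.filter fun q => boxOccupied κ M ω q).card : ℝ) < (l : ℝ) / 2} ≤
          ENNReal.ofReal (Real.exp (-C * l)) := by
  have hq : μ {ω | ω 0 < κ} < 1 := by
    rw [show {ω : Site d → ℝ | ω 0 < κ} = {ω | κ ≤ ω 0}ᶜ by ext; simp,
      measure_compl (measurableSet_le measurable_const (measurable_pi_apply 0))
        (measure_ne_top _ _), measure_univ]
    exact ENNReal.sub_lt_self ENNReal.one_ne_top one_ne_zero hκpos.ne'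
  have hlim : Tendsto (fun M : ℕ => (2 * 9 ^ d : ℝ≥0∞) ^ 2 * μ {ω | ω 0 < κ} ^ M ^ d)
      atTop (𝓝 0) := by
    simpa using ENNReal.Tendsto.const_mul ((ENNReal.tendsto_pow_atTop_nhds_zero_of_lt_one hq).comp
      (tendsto_pow_atTop (by omega))) (Or.inr (by finiteness))
  obtain ⟨M₀, hM₀⟩ := eventually_atTop.1
    (hlim.eventually (gt_mem_nhds (ENNReal.ofReal_pos.2 (Real.exp_pos (-1)))))
  refine ⟨M₀, fun M hM => ⟨1 / 2, by norm_num, fun l _ => ?_⟩⟩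
  exact (measure_sparseAnimalEvent_le hindep hident κ M l).trans
    (pow_mul_pow_le_ofReal_exp (by norm_cast; exact Nat.one_le_iff_ne_zero.2 (by positivity)) (hM₀ M hM).le (by omega))

/-- **Estimate (2.5)/(eq:bin_conc).**  Fix `κ > 0` with `ℙ(ω(0) ≥ κ) > 0`.  If the box
size `M` is large enough, then there is `C > 0` such that for every `l ≥ 1` the
probability that some ℓ¹-lattice animal `Γ ∋ 0` with `#Γ = l` has fewer than `l/2`
occupied boxes is at most `e^{-C l}`. -/
theorem lattice_animal_occupied_boxes
    (d : ℕ) (hd : 2 ≤ d) (μ : Measure ((Site d) → ℝ)) [IsProbabilityMeasure μ]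
    (hindep : iIndepFun (fun z : Site d => fun ω => ω z) μ)
    (hident : ∀ z : Site d, IdentDistrib (fun ω => ω z) (fun ω => ω 0) μ μ)
    (hpos : ∀ᵐ ω ∂μ, ∀ z : Site d, 0 ≤ ω z)
    (hnontriv : μ {ω | ω 0 = 0} < 1)
    (κ : ℝ) (hκ : 0 < κ) (hκpos : 0 < μ {ω | κ ≤ ω 0}) :
    ∃ M₀ : ℕ, ∀ M : ℕ, M₀ ≤ M →
      ∃ C : ℝ, 0 < C ∧ ∀ l : ℕ, 1 ≤ l →
        μ {ω | ∃ Γ : Finset (Site d), (0 : Site d) ∈ Γ ∧ IsLatticeAnimal Γ ∧ Γ.card = l ∧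
              ((Γ.filter fun q => boxOccupied κ M ω q).card : ℝ) < (l : ℝ) / 2} ≤
          ENNReal.ofReal (Real.exp (-C * l)) :=
  lattice_animal_occupied_boxes_general d hd μ hindep hident κ hκpos

end RWRP
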